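/- For the Tribonacci word t, the Parikh-vector discrepancy for letter 0 satisfies -0.6 < |t₀t₁⋯t_{N-1}|₀ - N/β < 0.9 for all N ≥ 1, where β is the real root of x³ - x² - x - 1. -/

import Mathlib

/-- The Tribonacci morphism τ: 0↦01, 1↦02, 2↦0, extended to words. -/
def tau : List (Fin 3) → List (Fin 3) :=
  fun w => w.flatMap (fun a => if a = 0 then [0, 1] else if a = 1 then [0, 2] else [0])

/-- The Tribonacci word, the fixed point of τ starting with 0.
Since τⁿ(0) is a prefix of τⁿ⁺¹(0) and |τ^(n+1)(0)| > n, this is well defined. -/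
def trib : ℕ → Fin 3 := fun n => (tau^[n + 1] [0]).getD n 0

/-- `u` is a (finite, contiguous) factor of the Tribonacci word. -/
def IsFactor (u : List (Fin 3)) : Prop :=
  ∃ i : ℕ, u = (List.range u.length).map (fun j => trib (i + j))

/-!
Every nonempty prefix of `t` is `τ(p)` or `τ(p) 0` for a shorter prefix `p`. As `|τ(p)|₀ = |p|`,
`|τ(p)|₁ = |p|₀` and `|τ(p)| = |p| + |p|₀ + |p|₁`, and as `1 = β⁻¹ + β⁻² + β⁻³`, the discrepancy
vector `(|p|₀ - |p|/β, |p|₁ - |p|/β²)` of `p` is sent to that of the longer prefix by one of two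
affine maps. An explicit octagon around the origin is invariant under both maps, and on it the
first coordinate stays in `[-0.532, 0.848]`.
-/

lemma tau_append (u v : List (Fin 3)) : tau (u ++ v) = tau u ++ tau v := by simp [tau]

lemma length_tau (w : List (Fin 3)) : (tau w).length = w.length + w.count 0 + w.count 1 := by
  induction w with
  | nil => rfl
  | cons a w ih => fin_cases a <;> simp_all [tau] <;> omega

lemma count_zero_tau (w : List (Fin 3)) : (tau w).count 0 = w.length := by
  induction w with
  | nil => rfl
  | cons a w ih => fin_cases a <;> simp_all [tau]

lemma count_one_tau (w : List (Fin 3)) : (tau w).count 1 = w.count 0 := by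
  induction w with
  | nil => rfl
  | cons a w ih => fin_cases a <;> simp_all [tau]

lemma tau_cons_eq_zero_cons (a : Fin 3) (w : List (Fin 3)) : ∃ v, tau (a :: w) = 0 :: v := by
  fin_cases a <;> exact ⟨_, rfl⟩

lemma tau_prefix {u v : List (Fin 3)} (h : u <+: v) : tau u <+: tau v := by
  obtain ⟨t, rfl⟩ := h
  exact ⟨tau t, (tau_append u t).symm⟩

lemma tau_iterate_zero_prefix_succ (k : ℕ) : tau^[k] [0] <+: tau^[k + 1] [0] := by
  induction k with
  | zero => exact ⟨[1], rfl⟩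
  | succ k ih =>
    rw [Function.iterate_succ_apply' _ k, Function.iterate_succ_apply' _ (k + 1)]
    exact tau_prefix ih

lemma tau_iterate_zero_prefix {j k : ℕ} (h : j ≤ k) : tau^[j] [0] <+: tau^[k] [0] := by
  induction k, h using Nat.le_induction with
  | base => exact List.prefix_refl _
  | succ k _ ih => exact ih.trans (tau_iterate_zero_prefix_succ k)

lemma tau_iterate_zero_eq_cons (k : ℕ) : ∃ v, tau^[k] [0] = 0 :: v := by
  induction k with
  | zero => exact ⟨[], rfl⟩
  | succ k ih =>
    obtain ⟨v, hv⟩ := ih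
    rw [Function.iterate_succ_apply', hv]
    exact tau_cons_eq_zero_cons 0 v

lemma lt_length_tau_iterate_zero (k : ℕ) : k < (tau^[k] [0]).length := by
  induction k with
  | zero => simp
  | succ k ih =>
    have h0 : 0 < (tau^[k] [0]).count 0 := by
      obtain ⟨v, hv⟩ := tau_iterate_zero_eq_cons k
      simp [hv]
    rw [Function.iterate_succ_apply', length_tau]
    omega

def tribPrefix (N : ℕ) : List (Fin 3) := (List.range N).map trib

lemma length_tribPrefix (N : ℕ) : (tribPrefix N).length = N := by simp [tribPrefix]

lemma tribPrefix_length_eq_of_prefix {w : List (Fin 3)} {k : ℕ} (h : w <+: tau^[k] [0]) :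
    tribPrefix w.length = w := by
  refine List.ext_getElem (length_tribPrefix _) fun i hi hw => ?_
  have hm : tau^[i + 1] [0] <+: tau^[max k (i + 1)] [0] :=
    tau_iterate_zero_prefix (le_max_right _ _)
  have hi' : i < (tau^[i + 1] [0]).length :=
    (lt_length_tau_iterate_zero (i + 1)).trans' (Nat.lt_succ_self i)
  simp only [tribPrefix, List.getElem_map, List.getElem_range, trib, List.getD_eq_getElem _ _ hi',
    hm.getElem hi']
  exact ((h.trans (tau_iterate_zero_prefix (le_max_left _ _))).getElem hw).symm

lemma tau_tribPrefix_append_zero_prefix (M : ℕ) :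
    tau (tribPrefix M) ++ [0] <+: tau^[M + 1] [0] := by
  have hM := lt_length_tau_iterate_zero M
  have hw : tribPrefix M = (tau^[M] [0]).take M := by
    simpa [Nat.min_eq_left hM.le] using
      tribPrefix_length_eq_of_prefix (List.take_prefix M (tau^[M] [0]))
  obtain ⟨v, hv⟩ := tau_cons_eq_zero_cons _ ((tau^[M] [0]).drop (M + 1))
  refine ⟨v, ?_⟩
  rw [Function.iterate_succ_apply', ← List.take_append_drop M (tau^[M] [0]),
    List.drop_eq_getElem_cons hM, tau_append, hv, hw]
  simp

lemma tribPrefix_eq_tau_append {M r : ℕ} (hr : r ≤ 1) :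
    tribPrefix ((tau (tribPrefix M)).length + r) = tau (tribPrefix M) ++ List.replicate r 0 := by
  have h : tau (tribPrefix M) ++ List.replicate r 0 <+: tau^[M + 1] [0] := by
    refine List.IsPrefix.trans ?_ (tau_tribPrefix_append_zero_prefix M)
    interval_cases r <;> simp
  simpa using tribPrefix_length_eq_of_prefix h

lemma exists_eq_add_of_lt_of_le_add_two {f : ℕ → ℕ} (h0 : f 0 = 0)
    (hf : ∀ M, f M < f (M + 1) ∧ f (M + 1) ≤ f M + 2) (N : ℕ) : ∃ M, ∃ r ≤ 1, N = f M + r := by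
  induction N with
  | zero => exact ⟨0, 0, zero_le_one, h0.symm⟩
  | succ N ih =>
    obtain ⟨M, r, hr, rfl⟩ := ih
    obtain ⟨h1, h2⟩ := hf M
    rcases Nat.lt_or_ge r 1 with h | h
    · exact ⟨M, 1, le_rfl, by omega⟩
    · exact ⟨M + 1, f M + r + 1 - f (M + 1), by omega, by omega⟩

lemma zero_lt_count_zero_tribPrefix {M : ℕ} (hM : 0 < M) : 0 < (tribPrefix M).count 0 :=
  List.count_pos_iff.mpr (List.mem_map_of_mem (List.mem_range.mpr hM) (f := trib))

lemma exists_tribPrefix_eq_tau_append {N : ℕ} (hN : 0 < N) :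
    ∃ M < N, ∃ r ≤ 1, tribPrefix N = tau (tribPrefix M) ++ List.replicate r 0 := by
  have hstep (M : ℕ) : (tau (tribPrefix M)).length < (tau (tribPrefix (M + 1))).length ∧
      (tau (tribPrefix (M + 1))).length ≤ (tau (tribPrefix M)).length + 2 := by
    have h : (tribPrefix (M + 1)) = tribPrefix M ++ [trib M] := by
      simp [tribPrefix, List.range_succ]
    rw [h, tau_append, List.length_append]
    have : 1 ≤ (tau [trib M]).length ∧ (tau [trib M]).length ≤ 2 := by
      generalize trib M = a; fin_cases a <;> simp [tau]
    omega
  obtain ⟨M, r, hr, rfl⟩ :=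
    exists_eq_add_of_lt_of_le_add_two (f := fun M ↦ (tau (tribPrefix M)).length) rfl hstep N
  refine ⟨M, ?_, r, hr, tribPrefix_eq_tau_append hr⟩
  rcases Nat.eq_zero_or_pos M with rfl | hM
  · simp_all
  · have := zero_lt_count_zero_tribPrefix hM
    simp only [length_tau, length_tribPrefix]
    omega

-- the letter `a` has frequency `β⁻¹ ^ (a + 1)` in `t`
noncomputable def discrepancy (β : ℝ) (a : Fin 3) (w : List (Fin 3)) : ℝ :=
  w.count a - w.length / β ^ (a.val + 1)

section

variable {β : ℝ} (hβ : β ^ 3 - β ^ 2 - β - 1 = 0)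
include hβ

lemma ne_zero_of_tribonacci_root : β ≠ 0 := by
  rintro rfl
  norm_num at hβ

lemma discrepancy_zero_tau_append (w : List (Fin 3)) (r : ℕ) :
    discrepancy β 0 (tau w ++ List.replicate r 0) =
      r * (1 - 1 / β) - (discrepancy β 0 w + discrepancy β 1 w) * (1 / β) := by
  have := ne_zero_of_tribonacci_root hβ
  simp only [discrepancy, List.count_append, List.length_append, List.length_replicate,
    count_zero_tau, List.count_replicate_self, length_tau, Fin.val_zero, Fin.val_one]
  field_simp
  push_cast
  linear_combination (w.length : ℝ) * β * hβ

lemma discrepancy_one_tau_append (w : List (Fin 3)) (r : ℕ) :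
    discrepancy β 1 (tau w ++ List.replicate r 0) =
      discrepancy β 0 w * (1 - 1 / β ^ 2) - (discrepancy β 1 w + r) * (1 / β ^ 2) := by
  have := ne_zero_of_tribonacci_root hβ
  have h : (List.replicate r (0 : Fin 3)).count 1 = 0 := List.count_eq_zero.2 (by simp)
  simp only [discrepancy, List.count_append, List.length_append, List.length_replicate,
    count_one_tau, h, length_tau, Fin.val_zero, Fin.val_one]
  field_simp
  push_cast
  linear_combination (w.length : ℝ) * β * hβ

lemma tribonacci_root_bounds : 1.839 < β ∧ β < 1.84 := by
  constructor
  · nlinarith [sq_nonneg (β - 1.839), sq_nonneg (β + 1), sq_nonneg β]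
  · nlinarith [sq_nonneg (β - 1.84), sq_nonneg (β + 1), sq_nonneg β]

lemma inv_tribonacci_root_bounds :
    (0.543 < 1 / β ∧ 1 / β < 0.544) ∧ (0.295 < 1 / β ^ 2 ∧ 1 / β ^ 2 < 0.296) := by
  obtain ⟨h1, h2⟩ := tribonacci_root_bounds hβ
  have hβ0 : 0 < β := by linarith
  refine ⟨⟨?_, ?_⟩, ?_, ?_⟩
  · rw [lt_div_iff₀ hβ0]; linarith
  · rw [div_lt_iff₀ hβ0]; linarith
  · rw [lt_div_iff₀ (by positivity)]; nlinarith
  · rw [div_lt_iff₀ (by positivity)]; nlinarith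

end

def InOctagon (x y : ℝ) : Prop :=
  -0.532 ≤ x ∧ x ≤ 0.848 ∧ -0.841 ≤ y ∧ y ≤ 0.784 ∧
    -0.712 ≤ x + y ∧ x + y ≤ 0.971 ∧ -1.093 ≤ x - y ∧ x - y ≤ 1.465

lemma InOctagon.step {u v x y : ℝ} (hu : 0.543 < u ∧ u < 0.544) (hv : 0.295 < v ∧ v < 0.296)
    {r : ℕ} (hr : r ≤ 1) (h : InOctagon x y) :
    InOctagon (r * (1 - u) - (x + y) * u) (x * (1 - v) - (y + r) * v) := by
  obtain ⟨hu1, hu2⟩ := hu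
  obtain ⟨hv1, hv2⟩ := hv
  obtain ⟨h1, h2, h3, h4, h5, h6, h7, h8⟩ := h
  -- Each constraint on the image is a combination of constraints on `(x, y)` whose coefficients,
  -- polynomial in `u` and `v`, are nonnegative in the given ranges.
  have := mul_nonneg (by linarith : (0 : ℝ) ≤ u) (by linarith : (0 : ℝ) ≤ 0.971 - (x + y))
  have := mul_nonneg (by linarith : (0 : ℝ) ≤ u) (by linarith : (0 : ℝ) ≤ x + y + 0.712)
  have := mul_nonneg (by linarith : (0 : ℝ) ≤ 1 - 2 * v) (by linarith : (0 : ℝ) ≤ x + 0.532)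
  have := mul_nonneg (by linarith : (0 : ℝ) ≤ v) (by linarith : (0 : ℝ) ≤ 1.093 - (y - x))
  have := mul_nonneg (by linarith : (0 : ℝ) ≤ 1 - 2 * v) (by linarith : (0 : ℝ) ≤ 0.848 - x)
  have := mul_nonneg (by linarith : (0 : ℝ) ≤ v) (by linarith : (0 : ℝ) ≤ 1.465 - (x - y))
  have := mul_nonneg (by linarith : (0 : ℝ) ≤ 2 * u + 2 * v - 1) (by linarith : (0 : ℝ) ≤ 0.784 - y)
  have := mul_nonneg (by linarith : (0 : ℝ) ≤ 1 - u - v) (by linarith : (0 : ℝ) ≤ 1.093 - (y - x))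
  have := mul_nonneg (by linarith : (0 : ℝ) ≤ 2 * u + 2 * v - 1) (by linarith : (0 : ℝ) ≤ y + 0.841)
  have := mul_nonneg (by linarith : (0 : ℝ) ≤ 1 - u - v) (by linarith : (0 : ℝ) ≤ 1.465 - (x - y))
  have := mul_nonneg (by linarith : (0 : ℝ) ≤ u - v) (by linarith : (0 : ℝ) ≤ 0.971 - (x + y))
  have := mul_nonneg (by linarith : (0 : ℝ) ≤ u - v) (by linarith : (0 : ℝ) ≤ x + y + 0.712)
  interval_cases r <;> refine ⟨?_, ?_, ?_, ?_, ?_, ?_, ?_, ?_⟩ <;> push_cast <;> linarith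

lemma inOctagon_discrepancy_tribPrefix {β : ℝ} (hβ : β ^ 3 - β ^ 2 - β - 1 = 0) (N : ℕ) :
    InOctagon (discrepancy β 0 (tribPrefix N)) (discrepancy β 1 (tribPrefix N)) := by
  obtain ⟨hu, hv⟩ := inv_tribonacci_root_bounds hβ
  induction N using Nat.strong_induction_on with
  | _ N ih =>
    rcases Nat.eq_zero_or_pos N with rfl | hN
    · norm_num [InOctagon, discrepancy, tribPrefix]
    obtain ⟨M, hMN, r, hr, hM⟩ := exists_tribPrefix_eq_tau_append hN
    rw [hM, discrepancy_zero_tau_append hβ, discrepancy_one_tau_append hβ]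
    exact (ih M hMN).step hu hv hr

theorem tribonacci_letter0_discrepancy (β : ℝ) (hβ : β ^ 3 - β ^ 2 - β - 1 = 0) :
    ∀ N : ℕ, 1 ≤ N →
      -0.6 < ((((List.range N).map trib).count 0 : ℝ) - N / β) ∧
        ((((List.range N).map trib).count 0 : ℝ) - N / β) < 0.9 := by
  intro N _
  obtain ⟨hlo, hhi, -⟩ := inOctagon_discrepancy_tribPrefix hβ N
  have h : discrepancy β 0 (tribPrefix N) = (((List.range N).map trib).count 0 : ℝ) - N / β := by
    simp [discrepancy, tribPrefix]
  constructor <;> linarith
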